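/- arXiv:1602.06719 — 3 statements merged into one kernel-verified Lean document; each statement's English description precedes it below -/
import Mathlib

section
/- Let $L$ be a positive linear functional with $L(1)=1$, $x \ge 0$, $b := L(\mathrm{id})$, and $\hat{L}(f) := L(f) + f(x) - f(b)$. Let $g$ be twice continuously differentiable on $[0,\infty)$ with bounded second derivative, and suppose $L((t-x)^2) \le A$ for some $A \ge 0$. Then $|\hat{L}(g) - g(x)| \le \|g''\|_\infty \big(A + (b-x)^2\big)$. -/
/-! Subtracting the tangent line, `φ t = g t - g x - g'(x) (t - x)`, the quantity becomes
`L φ - φ b`, since `L` reproduces affine functions (`L 1 = 1`, `L id = b`). Two applications of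
the mean value theorem give `|φ t| ≤ C (t - x)²` on `[0, ∞)`, and positivity of `L` turns this into
`|L φ| ≤ C L((t - x)²) ≤ C A`. -/

open Set

theorem abs_sub_sub_deriv_mul_le_of_abs_deriv_deriv_le {g : ℝ → ℝ} {s : Set ℝ} {C x t : ℝ}
    (hg : Differentiable ℝ g) (hg' : Differentiable ℝ (deriv g)) (hs : Convex ℝ s)
    (hC : ∀ u ∈ s, |deriv (deriv g) u| ≤ C) (hx : x ∈ s) (ht : t ∈ s) :
    |g t - g x - deriv g x * (t - x)| ≤ C * (t - x) ^ 2 := by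
  have hC0 : 0 ≤ C := (abs_nonneg _).trans (hC x hx)
  have hslope : ∀ u ∈ uIcc x t, ‖deriv g u - deriv g x‖ ≤ C * |t - x| := fun u hu =>
    calc ‖deriv g u - deriv g x‖ ≤ C * ‖u - x‖ :=
          hs.norm_image_sub_le_of_norm_deriv_le (fun v _ => hg' v) hC hx
            (hs.ordConnected.uIcc_subset hx ht hu)
      _ ≤ C * |t - x| := mul_le_mul_of_nonneg_left (abs_sub_left_of_mem_uIcc hu) hC0
  have hderiv : ∀ u ∈ uIcc x t, HasDerivWithinAt (fun v => g v - deriv g x * v)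
      (deriv g u - deriv g x) (uIcc x t) u := fun u _ => by
    have := (hg u).hasDerivAt.sub ((hasDerivAt_id' u).const_mul (deriv g x))
    rw [mul_one] at this
    exact this.hasDerivWithinAt
  calc |g t - g x - deriv g x * (t - x)|
      = ‖(g t - deriv g x * t) - (g x - deriv g x * x)‖ := by rw [Real.norm_eq_abs]; ring_nf
    _ ≤ C * |t - x| * ‖t - x‖ := (convex_uIcc x t).norm_image_sub_le_of_norm_hasDerivWithin_le
          hderiv hslope left_mem_uIcc right_mem_uIcc
    _ = C * (t - x) ^ 2 := by rw [Real.norm_eq_abs, mul_assoc, ← abs_mul, ← sq, abs_sq]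

namespace IsLinearMap

variable {L : (ℝ → ℝ) → ℝ}

theorem apply_affine (hL : IsLinearMap ℝ L) (hone : L (fun _ => 1) = 1) (c m x : ℝ) :
    L (fun t => c + m * (t - x)) = c + m * (L (fun t => t) - x) := by
  have hsplit : (fun t => c + m * (t - x)) = (c - m * x) • (fun _ => (1 : ℝ)) + m • fun t => t := by
    funext t; simp only [Pi.add_apply, Pi.smul_apply, smul_eq_mul]; ring
  rw [hsplit, hL.map_add, hL.map_smul, hL.map_smul, hone, smul_eq_mul, smul_eq_mul]
  ring

theorem le_of_forall_nonneg_le (hL : IsLinearMap ℝ L)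
    (hpos : ∀ f : ℝ → ℝ, (∀ t, 0 ≤ t → 0 ≤ f t) → 0 ≤ L f) {f g : ℝ → ℝ}
    (h : ∀ t, 0 ≤ t → f t ≤ g t) : L f ≤ L g := by
  have := hpos (g - f) fun t ht => sub_nonneg.mpr (h t ht)
  rwa [hL.map_sub, sub_nonneg] at this

theorem abs_le_of_forall_nonneg_abs_le (hL : IsLinearMap ℝ L)
    (hpos : ∀ f : ℝ → ℝ, (∀ t, 0 ≤ t → 0 ≤ f t) → 0 ≤ L f) {f g : ℝ → ℝ}
    (h : ∀ t, 0 ≤ t → |f t| ≤ g t) : |L f| ≤ L g := by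
  refine abs_le.mpr ⟨?_, hL.le_of_forall_nonneg_le hpos fun t ht => (abs_le.mp (h t ht)).2⟩
  rw [← hL.map_neg]
  exact hL.le_of_forall_nonneg_le hpos fun t ht => (abs_le.mp (h t ht)).1

end IsLinearMap

theorem auxiliary_operator_second_order_bound_general (L : (ℝ → ℝ) → ℝ)
    (hadd : ∀ f g : ℝ → ℝ, L (f + g) = L f + L g)
    (hsmul : ∀ (c : ℝ) (f : ℝ → ℝ), L (c • f) = c * L f)
    (hpos : ∀ f : ℝ → ℝ, (∀ t, 0 ≤ t → 0 ≤ f t) → 0 ≤ L f)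
    (hone : L (fun _ => 1) = 1)
    (x : ℝ) (hx : 0 ≤ x)
    (b : ℝ) (hb : b = L (fun t => t))
    (g : ℝ → ℝ) (hg : ContDiff ℝ 2 g)
    (C : ℝ) (hC : ∀ u, 0 ≤ u → |deriv (deriv g) u| ≤ C)
    (A : ℝ) (hLA : L (fun t => (t - x) ^ 2) ≤ A) :
    |(L g + g x - g b) - g x| ≤ C * (A + (b - x) ^ 2) := by
  have hL : IsLinearMap ℝ L := ⟨hadd, hsmul⟩
  have hC0 : 0 ≤ C := (abs_nonneg _).trans (hC 0 le_rfl)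
  have hb0 : 0 ≤ b := hb ▸ hpos _ fun t ht => ht
  have hg' : Differentiable ℝ (deriv g) :=
    (contDiff_succ_iff_deriv.mp hg).2.2.differentiable one_ne_zero
  set φ : ℝ → ℝ := fun t => g t - (g x + deriv g x * (t - x)) with hφ_def
  have hφ : ∀ t, 0 ≤ t → |φ t| ≤ C * (t - x) ^ 2 := fun t ht => by
    simpa only [hφ_def, sub_add_eq_sub_sub] using
      abs_sub_sub_deriv_mul_le_of_abs_deriv_deriv_le (hg.differentiable two_ne_zero) hg'
        (convex_Ici 0) hC hx ht
  have hLφ : |L φ| ≤ C * A :=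
    calc |L φ| ≤ L (C • fun t => (t - x) ^ 2) := hL.abs_le_of_forall_nonneg_abs_le hpos hφ
      _ = C * L (fun t => (t - x) ^ 2) := hsmul _ _
      _ ≤ C * A := mul_le_mul_of_nonneg_left hLA hC0
  have hsplit : L g + g x - g b - g x = L φ - φ b := by
    rw [show φ = g - fun t => g x + deriv g x * (t - x) from rfl, hL.map_sub,
      hL.apply_affine hone, ← hb]
    simp only [Pi.sub_apply]
    ring
  rw [hsplit]
  calc |L φ - φ b| ≤ |L φ| + |φ b| := abs_sub _ _
    _ ≤ C * A + C * (b - x) ^ 2 := add_le_add hLφ (hφ b hb0)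
    _ = C * (A + (b - x) ^ 2) := by ring

theorem auxiliary_operator_second_order_bound (L : (ℝ → ℝ) → ℝ)
    (hadd : ∀ f g : ℝ → ℝ, L (f + g) = L f + L g)
    (hsmul : ∀ (c : ℝ) (f : ℝ → ℝ), L (c • f) = c * L f)
    (hpos : ∀ f : ℝ → ℝ, (∀ t, 0 ≤ t → 0 ≤ f t) → 0 ≤ L f)
    (hone : L (fun _ => 1) = 1)
    (x : ℝ) (hx : 0 ≤ x)
    (b : ℝ) (hb : b = L (fun t => t))
    (g : ℝ → ℝ) (hg : ContDiff ℝ 2 g)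
    (C : ℝ) (hC : ∀ u, 0 ≤ u → |deriv (deriv g) u| ≤ C)
    (A : ℝ) (hA : 0 ≤ A) (hLA : L (fun t => (t - x) ^ 2) ≤ A) :
    |(L g + g x - g b) - g x| ≤ C * (A + (b - x) ^ 2) :=
  auxiliary_operator_second_order_bound_general L hadd hsmul hpos hone x hx b hb g hg C hC A hLA
end

section
/- Let $f : [0,\infty) \to \mathbb{R}$ with $|f(t)| \le M_f(1+t^2)$ for all $t \ge 0$, and let $a > 0$. Suppose $f$ is uniformly continuous on $[0, a+1]$ with modulus of continuity $\omega_{a+1}(f, \cdot)$. Then for all $x \in [0,a]$, $t \ge 0$, and $\delta > 0$: $|f(t) - f(x)| \le 4 M_f (1+a^2)(t-x)^2 + \left(1 + \frac{|t-x|}{\delta}\right)\omega_{a+1}(f,\delta)$. -/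
/-!
Near the diagonal, `|t - x| < 1` keeps `t` inside `[0, a + 1]`, and splitting the segment from
`x` to `t` into `⌈|t - x| / δ⌉₊` pieces of length at most `δ` bounds the increment by
`(1 + |t - x| / δ) ω`. Far from it, `(t - x)² ≥ 1` and the growth bound alone suffices.
-/

/-- Modulus of continuity of `f` on the interval `[0, a+1]`. -/
noncomputable def modulusOn (f : ℝ → ℝ) (a δ : ℝ) : ℝ :=
  sSup {y : ℝ | ∃ u v : ℝ, u ∈ Set.Icc 0 (a + 1) ∧ v ∈ Set.Icc 0 (a + 1) ∧
    |u - v| ≤ δ ∧ y = |f u - f v|}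

open Set

section Modulus

variable {f : ℝ → ℝ} {a δ C : ℝ}

theorem abs_sub_le_modulusOn (hC : ∀ u ∈ Icc 0 (a + 1), |f u| ≤ C) {u v : ℝ}
    (hu : u ∈ Icc 0 (a + 1)) (hv : v ∈ Icc 0 (a + 1)) (huv : |u - v| ≤ δ) :
    |f u - f v| ≤ modulusOn f a δ := by
  refine le_csSup ⟨C + C, ?_⟩ ⟨u, v, hu, hv, huv, rfl⟩
  rintro y ⟨u, v, hu, hv, -, rfl⟩
  exact (abs_sub _ _).trans (add_le_add (hC u hu) (hC v hv))

theorem modulusOn_nonneg (hC : ∀ u ∈ Icc 0 (a + 1), |f u| ≤ C) (ha : 0 ≤ a + 1)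
    (hδ : 0 ≤ δ) : 0 ≤ modulusOn f a δ := by
  have h0 : (0 : ℝ) ∈ Icc 0 (a + 1) := ⟨le_rfl, ha⟩
  simpa using abs_sub_le_modulusOn hC h0 h0 (by simpa using hδ)

theorem abs_sub_le_nat_mul_modulusOn (hC : ∀ u ∈ Icc 0 (a + 1), |f u| ≤ C) {u : ℝ}
    (hu : u ∈ Icc 0 (a + 1)) (n : ℕ) :
    ∀ v ∈ Icc 0 (a + 1), |v - u| ≤ n * δ → |f v - f u| ≤ n * modulusOn f a δ := by
  induction n with
  | zero =>
    intro v _ hvu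
    have : v = u := sub_eq_zero.mp (abs_nonpos_iff.mp (by simpa using hvu))
    simp [this]
  | succ n ih =>
    intro v hv hvu
    have hn : (0 : ℝ) < n + 1 := by positivity
    set w := u + ((n : ℝ) / (n + 1)) • (v - u) with hw
    have hw_mem : w ∈ Icc 0 (a + 1) :=
      (convex_Icc _ _).add_smul_sub_mem hu hv
        ⟨by positivity, (div_le_one hn).mpr (by linarith)⟩
    have hwu : |w - u| ≤ n * δ := by
      rw [hw, smul_eq_mul, add_sub_cancel_left, abs_mul, abs_of_nonneg (by positivity)]
      push_cast at hvu
      rw [div_mul_eq_mul_div, div_le_iff₀ hn]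
      nlinarith [Nat.cast_nonneg (α := ℝ) n]
    have hvw : |v - w| ≤ δ := by
      have : v - w = (v - u) / (n + 1) := by rw [hw, smul_eq_mul]; field_simp; ring
      rw [this, abs_div, abs_of_pos hn, div_le_iff₀ hn]
      push_cast at hvu
      linarith
    calc |f v - f u| ≤ |f v - f w| + |f w - f u| := abs_sub_le _ _ _
      _ ≤ modulusOn f a δ + n * modulusOn f a δ :=
        add_le_add (abs_sub_le_modulusOn hC hv hw_mem hvw) (ih w hw_mem hwu)
      _ = (n + 1 : ℕ) * modulusOn f a δ := by push_cast; ring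

theorem abs_sub_le_one_add_div_mul_modulusOn (hC : ∀ u ∈ Icc 0 (a + 1), |f u| ≤ C)
    (hδ : 0 < δ) {u v : ℝ} (hu : u ∈ Icc 0 (a + 1)) (hv : v ∈ Icc 0 (a + 1)) :
    |f v - f u| ≤ (1 + |v - u| / δ) * modulusOn f a δ := by
  set n := ⌈|v - u| / δ⌉₊
  have hω : 0 ≤ modulusOn f a δ := modulusOn_nonneg hC (by linarith [hu.1, hu.2]) hδ.le
  have hvu : |v - u| ≤ n * δ := (div_le_iff₀ hδ).mp (Nat.le_ceil _)
  have hn : (n : ℝ) ≤ 1 + |v - u| / δ := by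
    linarith [Nat.ceil_lt_add_one (div_nonneg (abs_nonneg (v - u)) hδ.le)]
  exact (abs_sub_le_nat_mul_modulusOn hC hu n v hv hvu).trans
    (mul_le_mul_of_nonneg_right hn hω)

end Modulus

theorem abs_le_of_mem_Icc_of_growth {f : ℝ → ℝ} {M b : ℝ} (hM : 0 ≤ M)
    (hf : ∀ t, 0 ≤ t → |f t| ≤ M * (1 + t ^ 2)) {u : ℝ} (hu : u ∈ Icc 0 b) :
    |f u| ≤ M * (1 + b ^ 2) :=
  (hf u hu.1).trans <| by gcongr; exacts [hu.1, hu.2]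

theorem two_add_sq_add_sq_le_of_one_le_abs_sub {a x t : ℝ} (hx : x ∈ Icc 0 a)
    (htx : 1 ≤ |t - x|) : 2 + t ^ 2 + x ^ 2 ≤ 4 * (1 + a ^ 2) * (t - x) ^ 2 := by
  obtain ⟨hx0, hxa⟩ := hx
  have hd : 1 ≤ (t - x) ^ 2 := by nlinarith [sq_abs (t - x)]
  have ht : t ^ 2 ≤ 2 * x ^ 2 + 2 * (t - x) ^ 2 := by nlinarith [sq_nonneg (t - 2 * x)]
  have hxa2 : x ^ 2 ≤ a ^ 2 := by nlinarith
  nlinarith [mul_le_mul_of_nonneg_left hd (sq_nonneg a)]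

theorem growth_modulus_estimate_general (f : ℝ → ℝ) (M : ℝ) (hM : 0 < M)
    (hf : ∀ t, 0 ≤ t → |f t| ≤ M * (1 + t ^ 2))
    (a : ℝ)
    (x : ℝ) (hx : x ∈ Set.Icc 0 a) (t : ℝ) (ht : 0 ≤ t)
    (δ : ℝ) (hδ : 0 < δ) :
    |f t - f x| ≤ 4 * M * (1 + a ^ 2) * (t - x) ^ 2
      + (1 + |t - x| / δ) * modulusOn f a δ := by
  have hC := fun u (hu : u ∈ Icc 0 (a + 1)) => abs_le_of_mem_Icc_of_growth hM.le hf hu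
  have hx' : x ∈ Icc 0 (a + 1) := ⟨hx.1, by linarith [hx.2]⟩
  have hquad : 0 ≤ 4 * M * (1 + a ^ 2) * (t - x) ^ 2 := by positivity
  rcases lt_or_ge |t - x| 1 with hnear | hfar
  · have ht' : t ∈ Icc 0 (a + 1) := ⟨ht, by linarith [le_abs_self (t - x), hx.2]⟩
    linarith [abs_sub_le_one_add_div_mul_modulusOn hC hδ hx' ht']
  · have hω := modulusOn_nonneg hC (by linarith [hx'.1, hx'.2]) hδ.le
    have hgrowth : |f t| + |f x| ≤ 4 * M * (1 + a ^ 2) * (t - x) ^ 2 := by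
      nlinarith [hf t ht, hf x hx.1, two_add_sq_add_sq_le_of_one_le_abs_sub hx hfar]
    have hterm : 0 ≤ (1 + |t - x| / δ) * modulusOn f a δ := mul_nonneg (by positivity) hω
    linarith [abs_sub (f t) (f x)]

theorem growth_modulus_estimate (f : ℝ → ℝ) (M : ℝ) (hM : 0 < M)
    (hf : ∀ t, 0 ≤ t → |f t| ≤ M * (1 + t ^ 2))
    (a : ℝ) (ha : 0 < a) (hcont : ContinuousOn f (Set.Icc 0 (a + 1)))
    (x : ℝ) (hx : x ∈ Set.Icc 0 a) (t : ℝ) (ht : 0 ≤ t)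
    (δ : ℝ) (hδ : 0 < δ) :
    |f t - f x| ≤ 4 * M * (1 + a ^ 2) * (t - x) ^ 2
      + (1 + |t - x| / δ) * modulusOn f a δ :=
  growth_modulus_estimate_general f M hM hf a x hx t ht δ hδ
end

section
/- Let $L$ be a positive linear functional with $L(1)=1$ on a suitable function space containing polynomials, and let $f$ satisfy $|f(t)-f(x)| \le \phi(t)\big(1+\frac{|t-x|}{\delta}\big)\Omega$ for all $t \ge 0$, where $\phi \ge 0$ and $\Omega, \delta > 0$. Then $|L(f) - f(x)| \le \big(L(\phi) + \frac{1}{\delta}\sqrt{L(\phi^2)}\sqrt{L((t-x)^2)}\big)\,\Omega$. -/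
/-!
Since `L` is monotone and `L 1 = 1`, the pointwise bound on `|f t - f x|` gives
`|L f - f x| ≤ (L φ + L (φ |· - x|) / δ) Ω`, and the Cauchy–Schwarz inequality for the
positive functional `L`, obtained from the nonnegativity of the quadratic
`λ ↦ L ((φ - λ |· - x|)²)`, bounds `L (φ |· - x|)` by `√(L φ²) √(L (· - x)²)`.
-/

open Real

def IsPositiveOn {α : Type*} (Λ : (α → ℝ) →ₗ[ℝ] ℝ) (s : Set α) : Prop :=
  ∀ g : α → ℝ, (∀ t ∈ s, 0 ≤ g t) → 0 ≤ Λ g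

namespace IsPositiveOn

variable {α : Type*} {Λ : (α → ℝ) →ₗ[ℝ] ℝ} {s : Set α}

theorem mono (hΛ : IsPositiveOn Λ s) {g h : α → ℝ} (hgh : ∀ t ∈ s, g t ≤ h t) :
    Λ g ≤ Λ h := by
  have := hΛ (h - g) fun t ht => sub_nonneg.mpr (hgh t ht)
  rwa [map_sub, sub_nonneg] at this

theorem abs_sub_const_le (hΛ : IsPositiveOn Λ s) (hΛ1 : Λ (fun _ => 1) = 1)
    {f F : α → ℝ} {c : ℝ} (hfF : ∀ t ∈ s, |f t - c| ≤ F t) :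
    |Λ f - c| ≤ Λ F := by
  have hsub : Λ (fun t => f t - c) = Λ f - c := by
    have : (fun t => f t - c) = f - c • fun _ => 1 := by ext; simp
    rw [this, map_sub, map_smul, hΛ1, smul_eq_mul, mul_one]
  rw [← hsub, abs_le, ← map_neg]
  exact ⟨hΛ.mono fun t ht => (abs_le.mp (hfF t ht)).1,
    hΛ.mono fun t ht => (abs_le.mp (hfF t ht)).2⟩

theorem apply_mul_sq_le (hΛ : IsPositiveOn Λ s) (g h : α → ℝ) :
    Λ (fun t => g t * h t) ^ 2 ≤ Λ (fun t => g t ^ 2) * Λ (fun t => h t ^ 2) := by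
  have hquad : ∀ r : ℝ, 0 ≤ Λ (fun t => h t ^ 2) * (r * r)
      + (-2 * Λ (fun t => g t * h t)) * r + Λ (fun t => g t ^ 2) := by
    intro r
    have hexp : (fun t => (g t - r * h t) ^ 2) = (r * r) • (fun t => h t ^ 2)
        + (-2 * r) • (fun t => g t * h t) + fun t => g t ^ 2 := by
      ext t; simp only [Pi.add_apply, Pi.smul_apply, smul_eq_mul]; ring
    have := hΛ (fun t => (g t - r * h t) ^ 2) fun t _ => sq_nonneg _
    rw [hexp, map_add, map_add, map_smul, map_smul, smul_eq_mul, smul_eq_mul] at this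
    linarith
  have := discrim_le_zero hquad
  rw [discrim] at this
  linarith

theorem apply_mul_le_sqrt_mul_sqrt (hΛ : IsPositiveOn Λ s) (g h : α → ℝ) :
    Λ (fun t => g t * h t) ≤ √(Λ (fun t => g t ^ 2)) * √(Λ (fun t => h t ^ 2)) := by
  have hh : 0 ≤ Λ (fun t => h t ^ 2) := hΛ _ fun t _ => sq_nonneg _
  rw [← sqrt_mul' _ hh]
  exact (le_abs_self _).trans (abs_le_sqrt (hΛ.apply_mul_sq_le g h))

end IsPositiveOn

theorem functional_estimate_cauchy_schwarz_general (L : (ℝ → ℝ) → ℝ)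
    (hadd : ∀ f g : ℝ → ℝ, L (f + g) = L f + L g)
    (hsmul : ∀ (c : ℝ) (f : ℝ → ℝ), L (c • f) = c * L f)
    (hpos : ∀ g : ℝ → ℝ, (∀ t, 0 ≤ t → 0 ≤ g t) → 0 ≤ L g)
    (hone : L (fun _ => 1) = 1)
    (f φ : ℝ → ℝ) (x : ℝ)
    (Ω δ : ℝ) (hΩ : 0 < Ω) (hδ : 0 < δ)
    (hfd : ∀ t, 0 ≤ t → |f t - f x| ≤ φ t * (1 + |t - x| / δ) * Ω) :
    |L f - f x| ≤
      (L φ + (1 / δ) * Real.sqrt (L (fun t => φ t ^ 2)) *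
        Real.sqrt (L (fun t => (t - x) ^ 2))) * Ω := by
  let Λ : (ℝ → ℝ) →ₗ[ℝ] ℝ := ⟨⟨L, hadd⟩, hsmul⟩
  have hΛ : IsPositiveOn Λ (Set.Ici 0) := hpos
  have hsplit : (fun t => φ t * (1 + |t - x| / δ) * Ω)
      = Ω • φ + (Ω / δ) • fun t => φ t * |t - x| := by
    ext t; simp only [Pi.add_apply, Pi.smul_apply, smul_eq_mul]; field_simp
  have hCS := hΛ.apply_mul_le_sqrt_mul_sqrt φ fun t => |t - x|
  simp only [sq_abs] at hCS
  calc |L f - f x| ≤ Λ (fun t => φ t * (1 + |t - x| / δ) * Ω) := hΛ.abs_sub_const_le hone hfd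
    _ = (L φ + (1 / δ) * Λ (fun t => φ t * |t - x|)) * Ω := by
      rw [hsplit, map_add, map_smul, map_smul, smul_eq_mul, smul_eq_mul]
      simp only [Λ, LinearMap.coe_mk, AddHom.coe_mk]
      ring
    _ ≤ _ := by
      rw [mul_assoc (1 / δ)]
      gcongr
      exact hCS

theorem functional_estimate_cauchy_schwarz (L : (ℝ → ℝ) → ℝ)
    (hadd : ∀ f g : ℝ → ℝ, L (f + g) = L f + L g)
    (hsmul : ∀ (c : ℝ) (f : ℝ → ℝ), L (c • f) = c * L f)
    (hpos : ∀ g : ℝ → ℝ, (∀ t, 0 ≤ t → 0 ≤ g t) → 0 ≤ L g)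
    (hone : L (fun _ => 1) = 1)
    (f φ : ℝ → ℝ) (x : ℝ) (hx : 0 ≤ x)
    (hφ : ∀ t, 0 ≤ t → 0 ≤ φ t)
    (Ω δ : ℝ) (hΩ : 0 < Ω) (hδ : 0 < δ)
    (hfd : ∀ t, 0 ≤ t → |f t - f x| ≤ φ t * (1 + |t - x| / δ) * Ω) :
    |L f - f x| ≤
      (L φ + (1 / δ) * Real.sqrt (L (fun t => φ t ^ 2)) *
        Real.sqrt (L (fun t => (t - x) ^ 2))) * Ω :=
  functional_estimate_cauchy_schwarz_general L hadd hsmul hpos hone f φ x Ω δ hΩ hδ hfd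
end
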